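/- Smoothness of the Hermite-type reconstruction (Lemma 4.4, multi-interval version): the piecewise-defined reconstruction I_c(V) is continuous at every interior node, with both one-sided values at t_n equal to the average (V_n(t_n) + V_{n+1}(t_n))/2 for 1 ≤ n ≤ N−1; the one-sided derivatives satisfy (I_c V)'|_{I_n}(t_n) = V_n'(t_n) and (I_c V)'|_{I_{n+1}}(t_n) = V_{n+1}'(t_n). Consequently, if V_n(t_n) = V_{n+1}(t_n) for all 1 ≤ n ≤ N−1 (i.e., all jumps vanish) then I_c(V) coincides with V on each interval, and if additionally V_n'(t_n) = V_{n+1}'(t_n) for all n then I_c(V) is continuously differentiable on [t₀, t_N]. -/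

import Mathlib

open scoped RealInnerProductSpace
open MeasureTheory

/-- First cubic Hermite basis function on `[a, b]`:
`φ₁(t) = 2((t-a)/(b-a))³ - 3((t-a)/(b-a))² + 1`. -/
noncomputable def hermite1 (a b t : ℝ) : ℝ :=
  2 * ((t - a) / (b - a)) ^ 3 - 3 * ((t - a) / (b - a)) ^ 2 + 1

/-- Second cubic Hermite basis function on `[a, b]`:
`φ₂(t) = -2((t-a)/(b-a))³ + 3((t-a)/(b-a))²`. -/
noncomputable def hermite2 (a b t : ℝ) : ℝ :=
  -2 * ((t - a) / (b - a)) ^ 3 + 3 * ((t - a) / (b - a)) ^ 2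

/-- Evaluation of the `H`-valued polynomial with coefficients `c` (degree at most `k`):
`t ↦ ∑_{i=0}^{k} tⁱ • c i`. -/
noncomputable def polyEval {H : Type*} [NormedAddCommGroup H] [NormedSpace ℝ H]
    (k : ℕ) (c : ℕ → H) (t : ℝ) : H :=
  ∑ i ∈ Finset.range (k + 1), t ^ i • c i

/-- Coefficients of the termwise derivative of the polynomial with coefficients `c`. -/
noncomputable def dC {H : Type*} [NormedAddCommGroup H] [NormedSpace ℝ H]
    (c : ℕ → H) : ℕ → H := fun i => ((i : ℝ) + 1) • c (i + 1)

/-- The Hermite-type reconstruction on `[a, b]` of the polynomial with coefficients `c`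
with jumps `ja` (at `a`) and `jb` (at `b`): `W = V - (ja/2)·φ₁ + (jb/2)·φ₂`. -/
noncomputable def hermRecon {H : Type*} [NormedAddCommGroup H] [NormedSpace ℝ H]
    (k : ℕ) (c : ℕ → H) (ja jb : H) (a b : ℝ) (t : ℝ) : H :=
  polyEval k c t - (hermite1 a b t / 2) • ja + (hermite2 a b t / 2) • jb

section helpers
variable {H : Type*} [NormedAddCommGroup H] [NormedSpace ℝ H]

lemma continuous_polyEval (k : ℕ) (c : ℕ → H) : Continuous (polyEval k c) := by
  unfold polyEval
  exact continuous_finset_sum _ fun i _ => (continuous_pow i).smul continuous_const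

lemma hasDerivAt_polyEval (k : ℕ) (c : ℕ → H) (hc : c (k + 1) = 0) (t : ℝ) :
    HasDerivAt (polyEval k c) (polyEval k (dC c) t) t := by
  have h : HasDerivAt (fun s : ℝ => ∑ i ∈ Finset.range (k + 1), s ^ i • c i)
      (∑ i ∈ Finset.range (k + 1), ((i : ℝ) * t ^ (i - 1)) • c i) t :=
    HasDerivAt.fun_sum fun i _ => (hasDerivAt_pow i t).smul_const (c i)
  have he : (∑ i ∈ Finset.range (k + 1), ((i : ℝ) * t ^ (i - 1)) • c i)
      = polyEval k (dC c) t := by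
    rw [Finset.sum_range_succ' (fun i => ((i : ℝ) * t ^ (i - 1)) • c i) k]
    unfold polyEval dC
    rw [Finset.sum_range_succ (fun i => t ^ i • (((i : ℝ) + 1) • c (i + 1))) k]
    simp only [Nat.cast_zero, zero_mul, zero_smul, add_zero, hc, smul_zero]
    refine Finset.sum_congr rfl fun i _ => ?_
    rw [smul_smul, Nat.add_sub_cancel]
    congr 1
    push_cast
    ring
  rw [← he]
  exact h

lemma hermite1_left (a b : ℝ) : hermite1 a b a = 1 := by simp [hermite1]

lemma hermite2_left (a b : ℝ) : hermite2 a b a = 0 := by simp [hermite2]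

lemma hermite1_right {a b : ℝ} (h : a ≠ b) : hermite1 a b b = 0 := by
  have : (b - a) / (b - a) = 1 := div_self (sub_ne_zero_of_ne h.symm)
  simp [hermite1, this]; ring

lemma hermite2_right {a b : ℝ} (h : a ≠ b) : hermite2 a b b = 1 := by
  have : (b - a) / (b - a) = 1 := div_self (sub_ne_zero_of_ne h.symm)
  simp [hermite2, this]; ring

lemma hasDerivAt_hermite1 (a b x : ℝ) :
    HasDerivAt (hermite1 a b)
      ((6 * ((x - a) / (b - a)) ^ 2 - 6 * ((x - a) / (b - a))) * (b - a)⁻¹) x := by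
  have hu : HasDerivAt (fun s : ℝ => (s - a) / (b - a)) ((b - a)⁻¹) x := by
    simpa using ((hasDerivAt_id x).sub_const a).div_const (b - a)
  have h := (((hu.pow 3).const_mul (2 : ℝ)).sub ((hu.pow 2).const_mul (3 : ℝ))).add_const 1
  refine (h.congr_deriv (by norm_num; ring)).congr_of_eventuallyEq
    (Filter.Eventually.of_forall fun y => ?_)
  simp [hermite1]

lemma hasDerivAt_hermite2 (a b x : ℝ) :
    HasDerivAt (hermite2 a b)
      ((-6 * ((x - a) / (b - a)) ^ 2 + 6 * ((x - a) / (b - a))) * (b - a)⁻¹) x := by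
  have hu : HasDerivAt (fun s : ℝ => (s - a) / (b - a)) ((b - a)⁻¹) x := by
    simpa using ((hasDerivAt_id x).sub_const a).div_const (b - a)
  have h := ((hu.pow 3).const_mul (-2 : ℝ)).add ((hu.pow 2).const_mul (3 : ℝ))
  refine (h.congr_deriv (by norm_num; ring)).congr_of_eventuallyEq
    (Filter.Eventually.of_forall fun y => ?_)
  simp [hermite2]

lemma hasDerivAt_hermRecon_endpoint (k : ℕ) (c : ℕ → H) (ja jb : H) {a b : ℝ}
    (hab : a ≠ b) (hc : c (k + 1) = 0) {x : ℝ} (hx : x = a ∨ x = b) :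
    HasDerivAt (hermRecon k c ja jb a b) (polyEval k (dC c) x) x := by
  have h1 := (hasDerivAt_hermite1 a b x).div_const 2 |>.smul_const ja
  have h2 := (hasDerivAt_hermite2 a b x).div_const 2 |>.smul_const jb
  have hp := hasDerivAt_polyEval k c hc x
  have key := (hp.sub h1).add h2
  have hz1 : (6 * ((x - a) / (b - a)) ^ 2 - 6 * ((x - a) / (b - a))) * (b - a)⁻¹ = 0 := by
    rcases hx with rfl | rfl
    · simp
    · rw [div_self (sub_ne_zero_of_ne hab.symm)]; ring
  have hz2 : (-6 * ((x - a) / (b - a)) ^ 2 + 6 * ((x - a) / (b - a))) * (b - a)⁻¹ = 0 := by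
    rcases hx with rfl | rfl
    · simp
    · rw [div_self (sub_ne_zero_of_ne hab.symm)]; ring
  rw [hz1, hz2] at key
  simp only [zero_div, zero_smul, sub_zero, add_zero] at key
  exact key.congr_of_eventuallyEq (Filter.Eventually.of_forall fun y => by simp [hermRecon])

lemma hermRecon_left (k : ℕ) (c : ℕ → H) (ja jb : H) (a b : ℝ) :
    hermRecon k c ja jb a b a = polyEval k c a - (2 : ℝ)⁻¹ • ja := by
  rw [hermRecon, hermite1_left, hermite2_left]
  norm_num

lemma hermRecon_right (k : ℕ) (c : ℕ → H) (ja jb : H) {a b : ℝ} (hab : a ≠ b) :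
    hermRecon k c ja jb a b b = polyEval k c b + (2 : ℝ)⁻¹ • jb := by
  rw [hermRecon, hermite1_right hab, hermite2_right hab]
  norm_num

end helpers

/-- Smoothness of the Hermite-type reconstruction (Lemma 4.4, multi-interval version).
`Vc n` are the coefficients of the polynomial piece `V_n` on `I_n = (t_{n-1}, t_n]`,
`J n` is the jump `[V]_n`, and `I_c(V)|_{I_n} = hermRecon k (Vc n) (J (n-1)) (J n) (t (n-1)) (t n)`.
The reconstruction is continuous at every interior node, with value the average of the one-sided
limits, and preserves the one-sided derivatives; if all jumps vanish then it coincides with `V`,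
and if additionally the derivative jumps vanish then it is C¹ on `[t₀, t_N]`. -/


theorem hermite_reconstruction_smoothness
    {H : Type*} [NormedAddCommGroup H] [NormedSpace ℝ H]
    (N : ℕ) (hN : 1 ≤ N) (t : ℕ → ℝ) (ht : ∀ n < N, t n < t (n + 1))
    (k : ℕ) (Vc : ℕ → ℕ → H) (hdeg : ∀ n i, k < i → Vc n i = 0)
    (J : ℕ → H) (hJ0 : J 0 = 0) (hJN : J N = 0)
    (hJ : ∀ n, 1 ≤ n → n < N →
      J n = polyEval k (Vc (n + 1)) (t n) - polyEval k (Vc n) (t n)) :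
    (∀ n, 1 ≤ n → n < N →
        hermRecon k (Vc n) (J (n - 1)) (J n) (t (n - 1)) (t n) (t n)
            = (2 : ℝ)⁻¹ • (polyEval k (Vc n) (t n) + polyEval k (Vc (n + 1)) (t n)) ∧
          hermRecon k (Vc (n + 1)) (J n) (J (n + 1)) (t n) (t (n + 1)) (t n)
            = (2 : ℝ)⁻¹ • (polyEval k (Vc n) (t n) + polyEval k (Vc (n + 1)) (t n)) ∧
          deriv (hermRecon k (Vc n) (J (n - 1)) (J n) (t (n - 1)) (t n)) (t n)
            = polyEval k (dC (Vc n)) (t n) ∧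
          deriv (hermRecon k (Vc (n + 1)) (J n) (J (n + 1)) (t n) (t (n + 1))) (t n)
            = polyEval k (dC (Vc (n + 1))) (t n)) ∧
      ((∀ n, 1 ≤ n → n < N → polyEval k (Vc n) (t n) = polyEval k (Vc (n + 1)) (t n)) →
        (∀ n, 1 ≤ n → n ≤ N → ∀ s : ℝ,
            hermRecon k (Vc n) (J (n - 1)) (J n) (t (n - 1)) (t n) s = polyEval k (Vc n) s) ∧
          ((∀ n, 1 ≤ n → n < N →
              polyEval k (dC (Vc n)) (t n) = polyEval k (dC (Vc (n + 1))) (t n)) →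
            ∃ G : ℝ → H,
              G (t 0) = hermRecon k (Vc 1) (J 0) (J 1) (t 0) (t 1) (t 0) ∧
                (∀ n, 1 ≤ n → n ≤ N → ∀ s ∈ Set.Ioc (t (n - 1)) (t n),
                  G s = hermRecon k (Vc n) (J (n - 1)) (J n) (t (n - 1)) (t n) s) ∧
                ContDiffOn ℝ 1 G (Set.Icc (t 0) (t N)))) := by
  classical
  have hcnext : ∀ n, Vc n (k + 1) = 0 := fun n => hdeg n _ (by omega)
  -- strict monotonicity up to N
  have tmono : ∀ n, n ≤ N → ∀ m, m < n → t m < t n := by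
    intro n
    induction n with
    | zero => intro _ m hm; omega
    | succ p ih =>
      intro hn m hm
      have hp : t p < t (p + 1) := ht p (by omega)
      rcases Nat.lt_succ_iff_lt_or_eq.mp hm with h | h
      · exact (ih (by omega) m h).trans hp
      · rw [h]; exact hp
  constructor
  · -- Part 1
    intro n h1 hn
    have hab : t (n - 1) ≠ t n := ne_of_lt (tmono n (le_of_lt hn) (n - 1) (by omega))
    have hab' : t n ≠ t (n + 1) := ne_of_lt (ht n hn)
    refine ⟨?_, ?_, ?_, ?_⟩
    · rw [hermRecon_right _ _ _ _ hab, hJ n h1 hn]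
      module
    · rw [hermRecon_left, hJ n h1 hn]
      module
    · exact (hasDerivAt_hermRecon_endpoint k (Vc n) _ _ hab (hcnext n) (Or.inr rfl)).deriv
    · exact (hasDerivAt_hermRecon_endpoint k (Vc (n + 1)) _ _ hab' (hcnext (n + 1))
        (Or.inl rfl)).deriv
  · -- Part 2
    intro hmatch
    have hJz : ∀ m, m ≤ N → J m = 0 := by
      intro m hm
      rcases Nat.eq_zero_or_pos m with rfl | hm1
      · exact hJ0
      rcases eq_or_lt_of_le hm with rfl | hmN
      · exact hJN
      · rw [hJ m hm1 hmN, ← hmatch m hm1 hmN, sub_self]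
    have hpiece : ∀ n, 1 ≤ n → n ≤ N → ∀ s : ℝ,
        hermRecon k (Vc n) (J (n - 1)) (J n) (t (n - 1)) (t n) s = polyEval k (Vc n) s := by
      intro n h1 hn s
      rw [hermRecon, hJz (n - 1) (by omega), hJz n hn]
      simp
    refine ⟨hpiece, fun hmatch' => ?_⟩
    -- Build the glued function
    set idx : ℝ → ℕ := fun s => 1 + ((Finset.Ico 1 N).filter (fun m => t m < s)).card with hidx
    set G : ℝ → H := fun s => polyEval k (Vc (idx s)) s with hG
    set D : ℝ → H := fun s => polyEval k (dC (Vc (idx s))) s with hD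
    have idx_eq : ∀ n, 1 ≤ n → n ≤ N → ∀ s : ℝ,
        (n = 1 ∨ t (n - 1) < s) → (n = N ∨ s ≤ t n) → idx s = n := by
      intro n h1 hn s hl hr
      have hfe : (Finset.Ico 1 N).filter (fun m => t m < s) = Finset.Ico 1 n := by
        ext m
        simp only [Finset.mem_filter, Finset.mem_Ico]
        constructor
        · rintro ⟨⟨hm1, hmN⟩, hms⟩
          refine ⟨hm1, ?_⟩
          by_contra hc
          push_neg at hc
          rcases hr with rfl | hr
          · omega
          · have htnm : t n ≤ t m := by
              rcases eq_or_lt_of_le hc with rfl | h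
              · exact le_rfl
              · exact le_of_lt (tmono m (le_of_lt hmN) n h)
            exact absurd hms (not_lt.2 (hr.trans htnm))
        · rintro ⟨hm1, hmn⟩
          refine ⟨⟨hm1, by omega⟩, ?_⟩
          rcases hl with rfl | hl
          · exfalso; omega
          · have htm : t m ≤ t (n - 1) := by
              rcases eq_or_lt_of_le (show m ≤ n - 1 by omega) with rfl | h
              · exact le_rfl
              · exact le_of_lt (tmono (n - 1) (by omega) m h)
            exact lt_of_le_of_lt htm hl
      simp only [hidx, hfe, Nat.card_Ico]
      omega
    have hGpoly : ∀ n, 1 ≤ n → n ≤ N → ∀ s ∈ Set.Ioc (t (n - 1)) (t n),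
        G s = polyEval k (Vc n) s := by
      intro n h1 hn s hs
      simp only [hG]
      rw [idx_eq n h1 hn s (Or.inr hs.1) (Or.inr hs.2)]
    have hidx0 : idx (t 0) = 1 :=
      idx_eq 1 le_rfl hN (t 0) (Or.inl rfl) (Or.inr (le_of_lt (tmono 1 hN 0 one_pos)))
    -- classification of points in [t 0, t N]
    have main : ∀ s ∈ Set.Icc (t 0) (t N),
        (∃ n, 1 ≤ n ∧ n ≤ N ∧ (∀ᶠ x in nhds s, idx x = n)) ∨
        (∃ n, 1 ≤ n ∧ n < N ∧ s = t n) := by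
      intro s hs
      by_cases hnode : ∃ n, 1 ≤ n ∧ n < N ∧ s = t n
      · exact Or.inr hnode
      left
      have hex : ∃ m, s ≤ t m := ⟨N, hs.2⟩
      by_cases h0 : s = t 0
      · -- near t 0, idx = 1
        refine ⟨1, le_rfl, hN, ?_⟩
        have ho : Set.Iio (t 1) ∈ nhds s := by
          refine isOpen_Iio.mem_nhds ?_
          rw [h0]; exact tmono 1 hN 0 one_pos
        filter_upwards [ho] with x hx
        refine idx_eq 1 le_rfl hN x (Or.inl rfl) ?_
        rcases eq_or_lt_of_le hN with rfl | hN2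
        · exact Or.inl rfl
        · exact Or.inr (le_of_lt hx)
      -- find the piece containing s
      set n := Nat.find hex with hn_def
      have hsn : s ≤ t n := Nat.find_spec hex
      have hnN : n ≤ N := Nat.find_min' hex hs.2
      have hn0 : n ≠ 0 := by
        intro hz
        exact h0 (le_antisymm (hz ▸ hsn) hs.1)
      have hlow : t (n - 1) < s := by
        have := Nat.find_min hex (m := n - 1) (by omega)
        push_neg at this
        exact this
      by_cases hsb : s = t n
      · -- s = t n; since not a node, n = N
        have hnN' : n = N := by
          by_contra hne
          exact hnode ⟨n, by omega, lt_of_le_of_ne hnN hne, hsb⟩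
        refine ⟨N, hN, le_rfl, ?_⟩
        have ho : Set.Ioi (t (N - 1)) ∈ nhds s := by
          refine isOpen_Ioi.mem_nhds ?_
          rw [hsb, hnN']
          exact tmono N le_rfl (N - 1) (by omega)
        filter_upwards [ho] with x hx
        refine idx_eq N hN le_rfl x ?_ (Or.inl rfl)
        rcases eq_or_lt_of_le hN with rfl | _
        · exact Or.inl rfl
        · exact Or.inr hx
      · -- s in the open interval
        refine ⟨n, by omega, hnN, ?_⟩
        have ho : Set.Ioo (t (n - 1)) (t n) ∈ nhds s :=
          isOpen_Ioo.mem_nhds ⟨hlow, lt_of_le_of_ne hsn hsb⟩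
        filter_upwards [ho] with x hx
        exact idx_eq n (by omega) hnN x (Or.inr hx.1) (Or.inr (le_of_lt hx.2))
    -- eventual equalities near interior nodes
    have ev_left : ∀ n, 1 ≤ n → n < N →
        (∀ᶠ x in nhdsWithin (t n) (Set.Iic (t n)), idx x = n) := by
      intro n h1 hn
      have ho : Set.Ioi (t (n - 1)) ∈ nhdsWithin (t n) (Set.Iic (t n)) :=
        nhdsWithin_le_nhds (isOpen_Ioi.mem_nhds (tmono n (le_of_lt hn) (n - 1) (by omega)))
      filter_upwards [ho, self_mem_nhdsWithin] with x hx1 hx2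
      exact idx_eq n h1 (le_of_lt hn) x (Or.inr hx1) (Or.inr hx2)
    have ev_right : ∀ n, 1 ≤ n → n < N →
        (∀ᶠ x in nhdsWithin (t n) (Set.Ici (t n)),
          G x = polyEval k (Vc (n + 1)) x ∧ D x = polyEval k (dC (Vc (n + 1))) x) := by
      intro n h1 hn
      have ho : Set.Iio (t (n + 1)) ∈ nhdsWithin (t n) (Set.Ici (t n)) :=
        nhdsWithin_le_nhds (isOpen_Iio.mem_nhds (ht n hn))
      filter_upwards [ho, self_mem_nhdsWithin] with x hx1 hx2
      rcases eq_or_lt_of_le (Set.mem_Ici.mp hx2) with rfl | hlt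
      · have hix : idx (t n) = n := idx_eq n h1 (le_of_lt hn) (t n)
          (Or.inr (tmono n (le_of_lt hn) (n - 1) (by omega))) (Or.inr le_rfl)
        constructor
        · show polyEval k (Vc (idx (t n))) (t n) = _
          rw [hix]; exact hmatch n h1 hn
        · show polyEval k (dC (Vc (idx (t n)))) (t n) = _
          rw [hix]; exact hmatch' n h1 hn
      · have hix : idx x = n + 1 := by
          refine idx_eq (n + 1) (by omega) hn x (Or.inr (by simpa using hlt)) ?_
          rcases eq_or_lt_of_le (show n + 1 ≤ N by omega) with h | _
          · exact Or.inl h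
          · exact Or.inr (le_of_lt hx1)
        constructor
        · simp only [hG, hix]
        · simp only [hD, hix]
    -- differentiability of G
    have hGderiv : ∀ s ∈ Set.Icc (t 0) (t N), HasDerivAt G (D s) s := by
      intro s hs
      rcases main s hs with ⟨n, h1, hn, hev⟩ | ⟨n, h1, hn, rfl⟩
      · have hix : idx s = n := hev.self_of_nhds
        have hp : HasDerivAt (polyEval k (Vc n)) (polyEval k (dC (Vc n)) s) s :=
          hasDerivAt_polyEval k (Vc n) (hcnext n) s
        have : HasDerivAt G (polyEval k (dC (Vc n)) s) s := by
          refine hp.congr_of_eventuallyEq ?_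
          filter_upwards [hev] with x hx
          simp only [hG, hx]
        simpa only [hD, hix] using this
      · -- interior node
        have hixn : idx (t n) = n :=
          idx_eq n h1 (le_of_lt hn) (t n)
            (Or.inr (tmono n (le_of_lt hn) (n - 1) (by omega))) (Or.inr le_rfl)
        have dleft : HasDerivWithinAt G (polyEval k (dC (Vc n)) (t n)) (Set.Iic (t n)) (t n) := by
          have hp := (hasDerivAt_polyEval k (Vc n) (hcnext n) (t n)).hasDerivWithinAt
            (s := Set.Iic (t n))
          refine hp.congr_of_eventuallyEq ?_ ?_
          · filter_upwards [ev_left n h1 hn] with x hx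
            simp only [hG, hx]
          · simp only [hG, hixn]
        have dright : HasDerivWithinAt G (polyEval k (dC (Vc n)) (t n)) (Set.Ici (t n)) (t n) := by
          have hp := (hasDerivAt_polyEval k (Vc (n + 1)) (hcnext (n + 1)) (t n)).hasDerivWithinAt
            (s := Set.Ici (t n))
          rw [← hmatch' n h1 hn] at hp
          refine hp.congr_of_eventuallyEq ?_ ?_
          · filter_upwards [ev_right n h1 hn] with x hx
            exact hx.1
          · simp only [hG, hixn]; exact hmatch n h1 hn
        have := dleft.union dright
        rw [Set.Iic_union_Ici, hasDerivWithinAt_univ] at this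
        simpa only [hD, hixn] using this
    -- continuity of D
    have hDcont : ContinuousOn D (Set.Icc (t 0) (t N)) := by
      intro s hs
      rcases main s hs with ⟨n, h1, hn, hev⟩ | ⟨n, h1, hn, rfl⟩
      · have hc : ContinuousAt D s := by
          refine ((continuous_polyEval k (dC (Vc n))).continuousAt).congr ?_
          filter_upwards [hev] with x hx
          simp only [hD, hx]
        exact hc.continuousWithinAt
      · have hixn : idx (t n) = n :=
          idx_eq n h1 (le_of_lt hn) (t n)
            (Or.inr (tmono n (le_of_lt hn) (n - 1) (by omega))) (Or.inr le_rfl)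
        have cleft : ContinuousWithinAt D (Set.Iic (t n)) (t n) := by
          refine ((continuous_polyEval k (dC (Vc n))).continuousWithinAt).congr_of_eventuallyEq
            ?_ ?_
          · filter_upwards [ev_left n h1 hn] with x hx
            simp only [hD, hx]
          · simp only [hD, hixn]
        have cright : ContinuousWithinAt D (Set.Ici (t n)) (t n) := by
          refine ((continuous_polyEval k (dC (Vc (n + 1)))).continuousWithinAt).congr_of_eventuallyEq ?_ ?_
          · filter_upwards [ev_right n h1 hn] with x hx
            exact hx.2
          · simp only [hD, hixn]; exact hmatch' n h1 hn
        have := cleft.union cright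
        rw [Set.Iic_union_Ici, continuousWithinAt_univ] at this
        exact this.continuousWithinAt
    refine ⟨G, ?_, ?_, ?_⟩
    · rw [hpiece 1 le_rfl hN (t 0)]
      simp only [hG, hidx0]
    · intro n h1 hn s hs
      rw [hpiece n h1 hn s]
      exact hGpoly n h1 hn s hs
    · have h0N : t 0 < t N := tmono N le_rfl 0 (by omega)
      have hud : UniqueDiffOn ℝ (Set.Icc (t 0) (t N)) := uniqueDiffOn_Icc h0N
      have h01 : (1 : WithTop ℕ∞) = 0 + 1 := by norm_num
      rw [h01, contDiffOn_succ_iff_derivWithin hud]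
      refine ⟨fun x hx => ((hGderiv x hx).differentiableAt).differentiableWithinAt, ?_, ?_⟩
      · intro h; exact absurd h (by norm_num)
      · rw [contDiffOn_zero]
        refine hDcont.congr ?_
        intro x hx
        rw [(hGderiv x hx).differentiableAt.derivWithin (hud x hx), (hGderiv x hx).deriv]
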